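/- arXiv:2409.07794 — 2 statements merged into one kernel-verified Lean document; each statement's English description precedes it below -/
import Mathlib

section
/- Let G be a connected signed graph in which every cycle has an even number of negative edges. Then there exists a polarity assignment β ∈ {1,-1}^N such that β_i β_j W_{ij} > 0 for every edge (i,j). (Cartwright–Harary Theorem, one direction.) -/
open Matrix

namespace Stmt6Aux

variable {N : ℕ} (W : Matrix (Fin N) (Fin N) ℝ)

/-- indicator of a negative edge at step `t` of walk `w` -/
noncomputable def f (w : ℕ → Fin N) (t : ℕ) : ℕ := if W (w t) (w (t + 1)) < 0 then 1 else 0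

/-- number of negative edges among the first `k` steps of `w` -/
noncomputable def cnt (w : ℕ → Fin N) (k : ℕ) : ℕ := ∑ t ∈ Finset.range k, f W w t

lemma cnt_eq_card (w : ℕ → Fin N) (k : ℕ) :
    ((Finset.range k).filter (fun t => W (w t) (w (t + 1)) < 0)).card = cnt W w k :=
  Finset.card_filter _ _

/-- Splitting a closed walk at a repeated vertex `w s = w t`. -/
lemma split_step {k s t : ℕ} {w : ℕ → Fin N}
    (hst : s < t) (htk : t ≤ k) (hd : t - s < k)
    (hrep : w s = w t) (hclosed : w k = w 0)
    (hwalk : ∀ t' < k, W (w t') (w (t' + 1)) ≠ 0)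
    (ih : ∀ m, m < k → ∀ v : ℕ → Fin N, v m = v 0 →
      (∀ t' < m, W (v t') (v (t' + 1)) ≠ 0) → Even (cnt W v m)) :
    Even (cnt W w k) := by
  set d := t - s with hdd
  have hsd : s + d = t := by omega
  -- inner closed walk A
  have hEA : Even (cnt W (fun t' => w (s + t')) d) := by
    apply ih d (by omega) _ ?_ ?_
    · show w (s + d) = w (s + 0)
      rw [hsd, Nat.add_zero]; exact hrep.symm
    · intro t' ht'
      show W (w (s + t')) (w (s + (t' + 1))) ≠ 0
      have h : s + (t' + 1) = (s + t') + 1 := by omega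
      rw [h]; exact hwalk _ (by omega)
  -- outer closed walk B
  set B : ℕ → Fin N := fun t' => if t' < s then w t' else w (t' + d) with hB
  have hB0 : B 0 = w 0 := by
    by_cases h0 : 0 < s
    · simp [hB, h0]
    · have hs0 : s = 0 := by omega
      have h1 : (0:ℕ) + d = t := by omega
      simp only [hB, if_neg (by omega : ¬ (0:ℕ) < s), h1]
      rw [← hrep, hs0]
  have hBk : B (k - d) = w k := by
    have h1 : ¬ (k - d < s) := by omega
    have h2 : k - d + d = k := by omega
    simp only [hB, if_neg h1, h2]
  have hEB : Even (cnt W B (k - d)) := by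
    apply ih (k - d) (by omega) _ ?_ ?_
    · rw [hBk, hB0, hclosed]
    · intro t' ht'
      rcases lt_trichotomy (t' + 1) s with h | h | h
      · have hts : t' < s := by omega
        simp only [hB, if_pos hts, if_pos h]
        exact hwalk t' (by omega)
      · have eA : B t' = w t' := by simp only [hB, if_pos (by omega : t' < s)]
        have e : B (t' + 1) = w (t' + 1) := by
          simp only [hB, if_neg (by omega : ¬ t' + 1 < s)]
          rw [show t' + 1 + d = t by omega, ← hrep, ← h]
        rw [eA, e]
        exact hwalk t' (by omega)
      · have hts : ¬ t' < s := by omega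
        have h2 : t' + 1 + d = t' + d + 1 := by omega
        simp only [hB, if_neg hts, if_neg (by omega : ¬ t' + 1 < s), h2]
        exact hwalk (t' + d) (by omega)
  -- count identity
  have hsum : cnt W w k = cnt W (fun t' => w (s + t')) d + cnt W B (k - d) := by
    have e1 : cnt W (fun t' => w (s + t')) d = ∑ x ∈ Finset.Ico s t, f W w x := by
      rw [Finset.sum_Ico_eq_sum_range]
      apply Finset.sum_congr (by rw [hdd])
      intro x hx
      simp only [f, Nat.add_assoc]
    have e2 : cnt W B (k - d) =
        (∑ x ∈ Finset.Ico 0 s, f W w x) + ∑ x ∈ Finset.Ico t k, f W w x := by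
      have hsplit : (∑ x ∈ Finset.Ico 0 s, f W B x) + ∑ x ∈ Finset.Ico s (k - d), f W B x
          = cnt W B (k - d) := by
        rw [Finset.sum_Ico_consecutive _ (by omega) (by omega)]
        rw [cnt, Finset.range_eq_Ico]
      rw [← hsplit]
      congr 1
      · apply Finset.sum_congr rfl
        intro x hx
        simp only [Finset.mem_Ico] at hx
        have eA : B x = w x := by simp only [hB, if_pos (by omega : x < s)]
        have eB : B (x + 1) = w (x + 1) := by
          rcases lt_or_eq_of_le (by omega : x + 1 ≤ s) with h | h
          · simp only [hB, if_pos h]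
          · simp only [hB, if_neg (by omega : ¬ x + 1 < s)]
            rw [show x + 1 + d = t by omega, ← hrep, ← h]
        simp only [f]
        rw [eA, eB]
      · rw [Finset.sum_Ico_eq_sum_range, Finset.sum_Ico_eq_sum_range]
        apply Finset.sum_congr (by rw [show k - d - s = k - t by omega])
        intro x hx
        simp only [Finset.mem_range] at hx
        have eA : B (s + x) = w (t + x) := by
          simp only [hB, if_neg (by omega : ¬ s + x < s)]; congr 1; omega
        have eB : B (s + x + 1) = w (t + x + 1) := by
          simp only [hB, if_neg (by omega : ¬ s + x + 1 < s)]; congr 1; omega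
        simp only [f]
        rw [eA, eB]
    rw [e1, e2, cnt, Finset.range_eq_Ico,
      ← Finset.sum_Ico_consecutive (f W w) (by omega : (0:ℕ) ≤ s) (by omega : s ≤ k),
      ← Finset.sum_Ico_consecutive (f W w) (by omega : s ≤ t) (by omega : t ≤ k)]
    ring
  rw [hsum]
  exact hEA.add hEB

/-- Every closed walk has an even number of negative edges. -/
lemma even_closed (hW : W.IsSymm)
    (hcyc : ∀ (k : ℕ) (w : ℕ → Fin N), 0 < k → w k = w 0 →
      (∀ t < k, W (w t) (w (t + 1)) ≠ 0) →
      (∀ s < k, ∀ t < k, s ≠ t →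
        ¬((w s = w t ∧ w (s + 1) = w (t + 1)) ∨ (w s = w (t + 1) ∧ w (s + 1) = w t))) →
      Even ((Finset.range k).filter (fun t => W (w t) (w (t + 1)) < 0)).card) :
    ∀ (k : ℕ) (w : ℕ → Fin N), w k = w 0 → (∀ t < k, W (w t) (w (t + 1)) ≠ 0) →
      Even (cnt W w k) := by
  intro k
  induction k using Nat.strong_induction_on with
  | _ k ih =>
    intro w hclosed hwalk
    rcases Nat.eq_zero_or_pos k with hk0 | hk0
    · subst hk0; simp [cnt]
    by_cases hsimple : ∀ s < k, ∀ t < k, s ≠ t →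
        ¬((w s = w t ∧ w (s + 1) = w (t + 1)) ∨ (w s = w (t + 1) ∧ w (s + 1) = w t))
    · rw [← cnt_eq_card]
      exact hcyc k w hk0 hclosed hwalk hsimple
    push_neg at hsimple
    obtain ⟨s, hsk, t, htk, hst, hdup⟩ := hsimple
    have key : ∃ s t, s < t ∧ t < k ∧
        ((w s = w t ∧ w (s + 1) = w (t + 1)) ∨ (w s = w (t + 1) ∧ w (s + 1) = w t)) := by
      rcases lt_or_gt_of_ne hst with h | h
      · exact ⟨s, t, h, htk, hdup⟩
      · refine ⟨t, s, h, hsk, ?_⟩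
        rcases hdup with ⟨h1, h2⟩ | ⟨h1, h2⟩
        · exact Or.inl ⟨h1.symm, h2.symm⟩
        · exact Or.inr ⟨h2.symm, h1.symm⟩
    clear hst hdup hsk htk
    obtain ⟨s, t, hst, htk, hdup⟩ := key
    rcases hdup with ⟨h1, _⟩ | ⟨h1, h2⟩
    · exact split_step W hst (by omega) (by omega) h1 hclosed hwalk ih
    · -- reversed repetition: w s = w (t+1), w (s+1) = w t
      rcases lt_or_ge (t + 1) k with hc1 | hc1
      · exact split_step W (by omega : s < t + 1) (by omega) (by omega) h1 hclosed hwalk ih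
      have htk1 : t + 1 = k := by omega
      rcases Nat.eq_zero_or_pos s with hs0 | hs0
      · -- s = 0
        rcases lt_or_ge 1 t with h1t | h1t
        · -- pair (1, t)
          have hrep : w 1 = w t := by rw [← h2, hs0]
          exact split_step W h1t (by omega) (by omega) hrep hclosed hwalk ih
        · -- k = 2 special case
          have ht1 : t = 1 := by omega
          have hk2 : k = 2 := by omega
          subst hk2
          have hw20 : w 2 = w 0 := hclosed
          have : cnt W w 2 = f W w 0 + f W w 1 := by
            simp [cnt, Finset.sum_range_succ]
          rw [this]
          have : f W w 1 = f W w 0 := by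
            simp only [f]
            have h3 : (1:ℕ) + 1 = 2 := rfl
            rw [h3, hw20, hW.apply (w 0) (w 1)]
          rw [this]
          exact ⟨f W w 0, rfl⟩
      · -- pair (0, s) : w 0 = w s
        have hrep : w 0 = w s := by
          rw [h1, htk1, hclosed]
        exact split_step W hs0 (by omega) (by omega) hrep hclosed hwalk ih

/-- Two walks with the same endpoints have negative-edge counts of equal parity. -/
lemma parity_add_even (hW : W.IsSymm)
    (heven : ∀ (k : ℕ) (w : ℕ → Fin N), w k = w 0 → (∀ t < k, W (w t) (w (t + 1)) ≠ 0) →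
      Even (cnt W w k))
    {i j : Fin N} {k1 k2 : ℕ} {w1 w2 : ℕ → Fin N}
    (h10 : w1 0 = i) (h1k : w1 k1 = j) (hw1 : ∀ t < k1, W (w1 t) (w1 (t + 1)) ≠ 0)
    (h20 : w2 0 = i) (h2k : w2 k2 = j) (hw2 : ∀ t < k2, W (w2 t) (w2 (t + 1)) ≠ 0) :
    Even (cnt W w1 k1 + cnt W w2 k2) := by
  set u : ℕ → Fin N := fun t => if t < k1 then w1 t else w2 (k2 - (t - k1)) with hu
  have hu0 : u 0 = i := by
    rcases Nat.eq_zero_or_pos k1 with h | h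
    · have e : u 0 = w2 k2 := by
        simp only [hu, if_neg (by omega : ¬ (0:ℕ) < k1)]
        congr 1; omega
      rw [e, h2k, ← h1k, h]
      exact h10
    · simp only [hu, if_pos h]; exact h10
  have huk : u (k1 + k2) = i := by
    simp only [hu, if_neg (by omega : ¬ k1 + k2 < k1), Nat.add_sub_cancel_left,
      Nat.sub_self, h20]
  have huwalk : ∀ t < k1 + k2, W (u t) (u (t + 1)) ≠ 0 := by
    intro t ht
    rcases lt_trichotomy (t + 1) k1 with h | h | h
    · simp only [hu, if_pos (by omega : t < k1), if_pos h]
      exact hw1 t (by omega)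
    · have e1 : u t = w1 t := by simp only [hu, if_pos (by omega : t < k1)]
      have e2 : u (t + 1) = w1 (t + 1) := by
        simp only [hu, if_neg (by omega : ¬ t + 1 < k1)]
        rw [show k2 - (t + 1 - k1) = k2 by omega, h2k, ← h1k, ← h]
      rw [e1, e2]
      exact hw1 t (by omega)
    · have e1 : u t = w2 (k2 - 1 - (t - k1) + 1) := by
        simp only [hu, if_neg (by omega : ¬ t < k1)]
        congr 1; omega
      have e2 : u (t + 1) = w2 (k2 - 1 - (t - k1)) := by
        simp only [hu, if_neg (by omega : ¬ t + 1 < k1)]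
        congr 1; omega
      rw [e1, e2, hW.apply]
      exact hw2 _ (by omega)
  have hEu : Even (cnt W u (k1 + k2)) := heven _ _ (by rw [huk, hu0]) huwalk
  have hcnt : cnt W u (k1 + k2) = cnt W w1 k1 + cnt W w2 k2 := by
    have hsplit : cnt W u (k1 + k2)
        = (∑ x ∈ Finset.Ico 0 k1, f W u x) + ∑ x ∈ Finset.Ico k1 (k1 + k2), f W u x := by
      rw [Finset.sum_Ico_consecutive _ (by omega) (by omega), cnt, Finset.range_eq_Ico]
    rw [hsplit]
    congr 1
    · rw [← Finset.range_eq_Ico, cnt]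
      apply Finset.sum_congr rfl
      intro x hx
      simp only [Finset.mem_range] at hx
      have e1 : u x = w1 x := by simp only [hu, if_pos hx]
      have e2 : u (x + 1) = w1 (x + 1) := by
        rcases lt_or_eq_of_le (by omega : x + 1 ≤ k1) with h | h
        · simp only [hu, if_pos h]
        · simp only [hu, if_neg (by omega : ¬ x + 1 < k1)]
          rw [show k2 - (x + 1 - k1) = k2 by omega, h2k, ← h1k, ← h]
      simp only [f]
      rw [e1, e2]
    · rw [Finset.sum_Ico_eq_sum_range, Nat.add_sub_cancel_left]
      have : ∀ x ∈ Finset.range k2, f W u (k1 + x) = f W w2 (k2 - 1 - x) := by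
        intro x hx
        simp only [Finset.mem_range] at hx
        have e1 : u (k1 + x) = w2 (k2 - 1 - x + 1) := by
          simp only [hu, if_neg (by omega : ¬ k1 + x < k1)]
          congr 1; omega
        have e2 : u (k1 + x + 1) = w2 (k2 - 1 - x) := by
          simp only [hu, if_neg (by omega : ¬ k1 + x + 1 < k1)]
          congr 1; omega
        simp only [f]
        rw [e1, e2, hW.apply (w2 (k2 - 1 - x)) (w2 (k2 - 1 - x + 1))]
      rw [Finset.sum_congr rfl this, Finset.sum_range_reflect]
      rfl
  rw [hcnt] at hEu
  exact hEu

end Stmt6Aux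

theorem stmt_6 {N : ℕ} (W : Matrix (Fin N) (Fin N) ℝ) (hW : W.IsSymm)
    (hconn : ∀ i j : Fin N, ∃ (k : ℕ) (w : ℕ → Fin N), w 0 = i ∧ w k = j ∧
      ∀ t < k, W (w t) (w (t + 1)) ≠ 0)
    (hcyc : ∀ (k : ℕ) (w : ℕ → Fin N), 0 < k → w k = w 0 →
      (∀ t < k, W (w t) (w (t + 1)) ≠ 0) →
      (∀ s < k, ∀ t < k, s ≠ t →
        ¬((w s = w t ∧ w (s + 1) = w (t + 1)) ∨ (w s = w (t + 1) ∧ w (s + 1) = w t))) →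
      Even ((Finset.range k).filter (fun t => W (w t) (w (t + 1)) < 0)).card) :
    ∃ β : Fin N → ℝ, (∀ i, β i = 1 ∨ β i = -1) ∧
      ∀ i j, W i j ≠ 0 → 0 < β i * β j * W i j := by
  classical
  have heven := Stmt6Aux.even_closed W hW hcyc
  rcases Nat.eq_zero_or_pos N with hN | hN
  · subst hN
    exact ⟨fun _ => 1, fun i => i.elim0, fun i => i.elim0⟩
  set i0 : Fin N := ⟨0, hN⟩ with hi0
  choose k ww h0 hk hwk using hconn i0
  set p : Fin N → ℕ := fun i => Stmt6Aux.cnt W (ww i) (k i) with hp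
  refine ⟨fun i => if Even (p i) then 1 else -1, ?_, ?_⟩
  · intro i
    by_cases h : Even (p i) <;> simp [h]
  intro i j hij
  -- extended walk from i0 to j through i
  set w' : ℕ → Fin N := fun t => if t ≤ k i then ww i t else j with hw'
  have hw'0 : w' 0 = i0 := by
    simp only [hw', if_pos (Nat.zero_le _)]; exact h0 i
  have hw'k : w' (k i + 1) = j := by
    simp only [hw', if_neg (by omega : ¬ k i + 1 ≤ k i)]
  have hw'walk : ∀ t < k i + 1, W (w' t) (w' (t + 1)) ≠ 0 := by
    intro t ht
    rcases lt_or_eq_of_le (by omega : t ≤ k i) with h | h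
    · simp only [hw', if_pos (by omega : t ≤ k i), if_pos (by omega : t + 1 ≤ k i)]
      exact hwk i t h
    · have e1 : w' t = ww i t := by simp only [hw', if_pos (by omega : t ≤ k i)]
      have e2 : w' (t + 1) = j := by simp only [hw', if_neg (by omega : ¬ t + 1 ≤ k i)]
      rw [e1, e2, h, hk i]
      exact hij
  have hw'cnt : Stmt6Aux.cnt W w' (k i + 1)
      = p i + (if W i j < 0 then 1 else 0) := by
    rw [Stmt6Aux.cnt, Finset.sum_range_succ]
    congr 1
    · apply Finset.sum_congr rfl
      intro x hx
      simp only [Finset.mem_range] at hx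
      have e1 : w' x = ww i x := by simp only [hw', if_pos (by omega : x ≤ k i)]
      have e2 : w' (x + 1) = ww i (x + 1) := by
        simp only [hw', if_pos (by omega : x + 1 ≤ k i)]
      simp only [Stmt6Aux.f]
      rw [e1, e2]
    · have e1 : w' (k i) = ww i (k i) := by simp only [hw', if_pos (le_refl (k i))]
      have e2 : w' (k i + 1) = j := by
        simp only [hw', if_neg (by omega : ¬ k i + 1 ≤ k i)]
      simp only [Stmt6Aux.f]
      rw [e1, e2, hk i]
  have key := Stmt6Aux.parity_add_even W hW heven (h0 j) (hk j) (hwk j) hw'0 hw'k hw'walk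
  rw [hw'cnt] at key
  -- key : Even (p j + (p i + ind))
  rcases hij.lt_or_gt with hneg | hpos
  · rw [if_pos hneg] at key
    have hiff : Even (p j) ↔ ¬ Even (p i) := by
      rw [Nat.even_add] at key
      rw [key, Nat.even_add_one]
    by_cases hpi : Even (p i)
    · have hpj : ¬ Even (p j) := by rw [hiff]; exact fun h => h hpi
      simp only [if_pos hpi, if_neg hpj]
      nlinarith
    · have hpj : Even (p j) := hiff.mpr hpi
      simp only [if_neg hpi, if_pos hpj]
      nlinarith
  · rw [if_neg (by linarith : ¬ W i j < 0)] at key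
    have hiff : Even (p j) ↔ Even (p i) := by
      rw [Nat.even_add] at key
      rw [key]; simp
    by_cases hpi : Even (p i)
    · simp only [if_pos hpi, if_pos (hiff.mpr hpi)]
      nlinarith
    · simp only [if_neg hpi, if_neg (fun h => hpi (hiff.mp h))]
      nlinarith
end

section
/- Let W be symmetric with β-consistent signs (β_i β_j W_{ij} ≥ 0 for i ≠ j, β ∈ {1,-1}^N), and suppose the self-loop weights satisfy W_{ii} ≥ 2 Σ_j max(-W_{ij}, 0) for every i. Then the generalized Laplacian L = D - W + diag(W), with D_{ii} = Σ_j W_{ij}, is positive semi-definite. -/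
open Matrix

theorem stmt_13 {N : ℕ} (W : Matrix (Fin N) (Fin N) ℝ) (hW : W.IsSymm)
    (β : Fin N → ℝ) (hβ : ∀ i, β i = 1 ∨ β i = -1)
    (hcons : ∀ i j, i ≠ j → 0 ≤ β i * β j * W i j)
    (hself : ∀ i, 2 * ∑ j, max (-W i j) 0 ≤ W i i)
    (L : Matrix (Fin N) (Fin N) ℝ)
    (hL : L = Matrix.diagonal (fun i => ∑ j, W i j) - W
        + Matrix.diagonal (fun i => W i i)) :
    L.PosSemidef := by
  have hWsym : ∀ i j, W j i = W i j := fun i j => by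
    conv_lhs => rw [← hW]
    rfl
  rw [posSemidef_iff_dotProduct_mulVec]
  constructor
  · rw [hL]
    have hWH : W.IsHermitian := by
      rw [IsHermitian, conjTranspose_eq_transpose_of_trivial]; exact hW
    exact (((isHermitian_diagonal _).sub hWH).add (isHermitian_diagonal _))
  intro x
  have hstar : star x = x := star_trivial x
  set F : Fin N → Fin N → ℝ := fun i j => |W i j| * x i ^ 2 - W i j * (x i * x j) with hF
  have habs : ∀ a : ℝ, a = |a| - 2 * max (-a) 0 := by
    intro a
    rcases le_total 0 a with h | h
    · rw [abs_of_nonneg h, max_eq_right (by linarith)]; ring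
    · rw [abs_of_nonpos h, max_eq_left (by linarith)]; ring
  have hQ : dotProduct (star x) (L *ᵥ x)
      = (∑ i, ∑ j, F i j)
        + ∑ i, (W i i - 2 * ∑ j, max (-W i j) 0) * x i ^ 2 := by
    rw [hstar, hL]
    simp only [dotProduct, mulVec, Matrix.sub_apply, Matrix.add_apply, diagonal_apply]
    rw [← Finset.sum_add_distrib]
    refine Finset.sum_congr rfl fun i _ => ?_
    have hin : (∑ j, ((if i = j then ∑ k, W i k else 0) - W i j
          + if i = j then W i i else 0) * x j)
        = ((∑ k, W i k) + W i i) * x i - ∑ j, W i j * x j := by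
      have : (∑ j, ((if i = j then ∑ k, W i k else 0) - W i j
            + if i = j then W i i else 0) * x j)
          = ∑ j, ((if i = j then ((∑ k, W i k) + W i i) * x j else 0) - W i j * x j) := by
        refine Finset.sum_congr rfl fun j _ => ?_
        by_cases h : i = j <;> simp [h] <;> ring
      rw [this, Finset.sum_sub_distrib, Finset.sum_ite_eq]
      simp
    rw [hin]
    have hmax : ∑ j, W i j = (∑ j, |W i j|) - 2 * ∑ j, max (-W i j) 0 := by
      rw [Finset.mul_sum, ← Finset.sum_sub_distrib]
      exact Finset.sum_congr rfl fun j _ => habs (W i j)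
    simp only [hF]
    have e1 : ∑ j, (|W i j| * x i ^ 2 - W i j * (x i * x j))
        = (∑ j, |W i j|) * x i ^ 2 - x i * ∑ j, W i j * x j := by
      rw [Finset.sum_sub_distrib, Finset.sum_mul, Finset.mul_sum]
      congr 1
      exact Finset.sum_congr rfl fun j _ => by ring
    rw [e1, hmax]
    ring
  rw [hQ]
  have hS : 0 ≤ ∑ i, ∑ j, F i j := by
    have hpair : ∀ i j, 0 ≤ F i j + F j i := by
      intro i j
      simp only [hF, hWsym i j]
      rcases le_total 0 (W i j) with h | h
      · rw [abs_of_nonneg h]; nlinarith [sq_nonneg (x i - x j), mul_nonneg h (sq_nonneg (x i - x j))]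
      · rw [abs_of_nonpos h]; nlinarith [mul_nonpos_of_nonpos_of_nonneg h (sq_nonneg (x i + x j))]
    have h2 : 0 ≤ ∑ i, ∑ j, (F i j + F j i) :=
      Finset.sum_nonneg fun i _ => Finset.sum_nonneg fun j _ => hpair i j
    have h3 : ∑ i, ∑ j, (F i j + F j i) = (∑ i, ∑ j, F i j) + ∑ i, ∑ j, F i j := by
      rw [← Finset.sum_add_distrib]
      simp only [Finset.sum_add_distrib]
      rw [Finset.sum_comm (f := fun i j => F j i)]
    linarith
  have hC : 0 ≤ ∑ i, (W i i - 2 * ∑ j, max (-W i j) 0) * x i ^ 2 :=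
    Finset.sum_nonneg fun i _ => mul_nonneg (by linarith [hself i]) (sq_nonneg _)
  linarith
end
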